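/- arXiv:2402.18316 — 2 statements merged into one kernel-verified Lean document; each statement's English description precedes it below -/
import Mathlib

section
/- Let κ < 1/2 and c ≥ √2. If u ∈ C²(ℝ;ℂ) satisfies u' ∈ L²(ℝ), 1−|u|² ∈ L²(ℝ), and the traveling-wave equation TW(c,κ) on ℝ, then u is trivial: there exists φ ∈ ℝ such that u(x) = e^{iφ} for all x ∈ ℝ. -/
/-!
With `ρ = |u|²`, the equation has two conserved quantities, the momentum
`Im (ū u') + c/2 (1 - ρ)` and the energy `|u'|² - (1 - ρ)²/2 - κ/2 ρ'²`. Finite energy makes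
both vanish identically, since they tend to `0` along a sequence on which `u' → 0` and `|u| → 1`.
Eliminating `u'` through `|ū u'|² = ρ |u'|²` leaves `ρ'² (1 - 2κρ) = (1 - ρ)² (2ρ - c²)`.
For `c² > 2` the two sides have opposite signs when `ρ` is close to `1`, so `{ρ = 1}` is open as
well as closed, and it is nonempty because `1 - ρ ∈ L²`. For `c² = 2` the identity reads
`ρ'² (1 - 2κρ) = 2 (ρ - 1)³` with `1 - 2κρ > 0`, so `ρ ≥ 1` and `ρ' ≠ 0` wherever `ρ > 1`:
a point with `ρ > 1` would make `ρ` monotone away from it and `1 - ρ ∉ L²`. Hence `ρ ≡ 1`,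
so `ρ' = 0`, the vanishing energy gives `u' = 0`, and `u` is a constant of modulus one.
-/

open MeasureTheory Real Filter Set

noncomputable section

/-- The traveling-wave equation TW(c,κ):
`-i c u' + u'' + u (1 - |u|²) - κ u (|u|²)'' = 0` on `ℝ`. -/
def TW (c κ : ℝ) (u : ℝ → ℂ) : Prop :=
  ∀ x : ℝ,
    -Complex.I * (c : ℂ) * deriv u x + deriv (deriv u) x
      + u x * (1 - ((‖u x‖ ^ 2 : ℝ) : ℂ))
      - (κ : ℂ) * u x * deriv (deriv fun y : ℝ => ((‖u y‖ ^ 2 : ℝ) : ℂ)) x = 0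

/-- Membership in the energy space `𝒳(ℝ)`:
`u' ∈ L²(ℝ)` and `1 - |u|² ∈ L²(ℝ)`. -/
def inX (u : ℝ → ℂ) : Prop :=
  MemLp (deriv u) 2 (volume : Measure ℝ) ∧
  MemLp (fun x : ℝ => 1 - ‖u x‖ ^ 2) 2 (volume : Measure ℝ)

open scoped InnerProductSpace Topology ENNReal

theorem exists_norm_lt_of_integrable {α E : Type*} [MeasurableSpace α] [NormedAddCommGroup E]
    {μ : Measure α} (hμ : μ univ = ∞) {f : α → E} (hf : Integrable f μ) {ε : ℝ} (hε : 0 < ε) :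
    ∃ x, ‖f x‖ < ε := by
  by_contra! H
  exact (hf.measure_norm_ge_lt_top hε).ne (measure_mono_top (fun x _ => H x) hμ)

theorem Continuous.eq_of_forall_dist_lt_imp_eq {X Y : Type*} [TopologicalSpace X]
    [PreconnectedSpace X] [MetricSpace Y] {f : X → Y} (hf : Continuous f) {a : Y} {ε : ℝ}
    (hgap : ∀ x, dist (f x) a < ε → f x = a) {x₀ : X} (hx₀ : dist (f x₀) a < ε) (x : X) :
    f x = a := by
  have hball : f ⁻¹' Metric.ball a ε = f ⁻¹' {a} :=
    Set.ext fun y => ⟨hgap y, fun hy => by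
      simpa [Set.mem_singleton_iff.1 hy] using dist_nonneg.trans_lt hx₀⟩
  have hclopen : IsClopen (f ⁻¹' Metric.ball a ε) :=
    ⟨hball ▸ isClosed_singleton.preimage hf, Metric.isOpen_ball.preimage hf⟩
  exact hgap x (Set.eq_univ_iff_forall.1 (hclopen.eq_univ ⟨x₀, hx₀⟩) x)

theorem apply_le_of_deriv_pos {h d : ℝ → ℝ} (hd : ∀ x, HasDerivAt h (d x) x)
    (hne : ∀ x, 0 < h x → d x ≠ 0) {x₀ b : ℝ} (hpos : 0 < h x₀) (hdpos : 0 < d x₀)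
    (hb : x₀ ≤ b) : h x₀ ≤ h b := by
  by_contra! hlt
  obtain ⟨ξ, hξ, hmax⟩ := isCompact_Icc.exists_isMaxOn (nonempty_Icc.2 hb)
    fun x _ => (hd x).continuousAt.continuousWithinAt
  have hξ₀ : h x₀ ≤ h ξ := hmax (left_mem_Icc.2 hb)
  rcases hξ.1.eq_or_lt with rfl | hxξ
  · -- a maximum at the left end of `[x₀, b]` forces `d x₀ ≤ 0`
    have hcone : b - x₀ ∈ posTangentConeAt (Icc x₀ b) x₀ :=
      sub_mem_posTangentConeAt_of_segment_subset (segment_eq_Icc hb ▸ Subset.rfl)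
    have := hmax.localize.hasFDerivWithinAt_nonpos (hd x₀).hasDerivWithinAt hcone
    have hxb : x₀ < b := hb.lt_of_ne (by rintro rfl; exact lt_irrefl _ hlt)
    rw [ContinuousLinearMap.toSpanSingleton_apply, smul_eq_mul] at this
    nlinarith
  rcases hξ.2.eq_or_lt with rfl | hξb
  · linarith
  exact hne ξ (hpos.trans_le hξ₀)
    ((hmax.isLocalMax (Icc_mem_nhds hxξ hξb)).hasDerivAt_eq_zero (hd ξ))

theorem nonpos_of_deriv_ne_zero_of_integrable_sq {h d : ℝ → ℝ} (hd : ∀ x, HasDerivAt h (d x) x)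
    (hne : ∀ x, 0 < h x → d x ≠ 0) (hint : Integrable (fun x => h x ^ 2)) (x : ℝ) :
    h x ≤ 0 := by
  by_contra! hx
  obtain ⟨s, hs, hle⟩ : ∃ s : Set ℝ, volume s = ∞ ∧ ∀ y ∈ s, h x ≤ h y := by
    rcases (hne x hx).lt_or_gt with hneg | hpos
    · refine ⟨Iic x, volume_Iic, fun y hy => ?_⟩
      have hd' : ∀ t, HasDerivAt (fun t => h (-t)) (-d (-t)) t := fun t => by
        simpa [Function.comp_def] using (hd (-t)).scomp t (hasDerivAt_neg t)
      simpa using apply_le_of_deriv_pos hd' (fun t ht => neg_ne_zero.2 (hne _ ht))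
        (x₀ := -x) (b := -y) (by simpa using hx) (by simpa using hneg) (neg_le_neg hy)
    · exact ⟨Ici x, volume_Ici, fun y hy => apply_le_of_deriv_pos hd hne hx hpos hy⟩
  refine (hint.measure_norm_ge_lt_top (pow_pos hx 2)).ne (measure_mono_top (fun y hy => ?_) hs)
  simpa using pow_le_pow_left₀ hx.le (hle y hy) 2

theorem exists_seq_tendsto_of_integrable {E F : Type*} [NormedAddCommGroup E]
    [NormedAddCommGroup F] [ProperSpace E] [ProperSpace F] {u : ℝ → E} {v : ℝ → F}
    (hint : Integrable (fun x => (1 - ‖u x‖ ^ 2) ^ 2 + ‖v x‖ ^ 2)) :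
    ∃ (a : ℕ → ℝ) (z : E), ‖z‖ = 1 ∧ Tendsto (fun n => (u (a n), v (a n))) atTop (𝓝 (z, 0)) := by
  set g : E × F → ℝ := fun p => (1 - ‖p.1‖ ^ 2) ^ 2 + ‖p.2‖ ^ 2
  have hg : Continuous g := by fun_prop
  choose a ha using fun n : ℕ =>
    exists_norm_lt_of_integrable (by simp) hint (Nat.one_div_pos_of_nat (n := n))
  have hsmall : ∀ n, g (u (a n), v (a n)) < 1 / (n + 1) := fun n =>
    (le_abs_self _).trans_lt (ha n)
  have hbdd : ∀ n, (u (a n), v (a n)) ∈ Metric.closedBall (0 : E × F) 2 := fun n => by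
    have h1 : (1 - ‖u (a n)‖ ^ 2) ^ 2 + ‖v (a n)‖ ^ 2 < 1 :=
      (hsmall n).trans_le <|
        div_le_one_of_le₀ (by linarith [n.cast_nonneg (α := ℝ)]) (by positivity)
    have hu : ‖u (a n)‖ ^ 2 < 2 ^ 2 := by nlinarith [sq_nonneg ‖v (a n)‖]
    have hv : ‖v (a n)‖ ^ 2 < 2 ^ 2 := by nlinarith [sq_nonneg (1 - ‖u (a n)‖ ^ 2)]
    rw [mem_closedBall_zero_iff, Prod.norm_def, max_le_iff]
    exact ⟨(abs_lt_of_sq_lt_sq' hu zero_le_two).2.le,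
      (abs_lt_of_sq_lt_sq' hv zero_le_two).2.le⟩
  obtain ⟨⟨z, w⟩, -, φ, hφ, hlim⟩ := (isCompact_closedBall (0 : E × F) 2).tendsto_subseq hbdd
  have hgp : g (z, w) = 0 := tendsto_nhds_unique ((hg.tendsto _).comp hlim) <|
    squeeze_zero (fun n => add_nonneg (sq_nonneg _) (sq_nonneg _))
      (fun n => (hsmall (φ n)).le)
      (tendsto_one_div_add_atTop_nhds_zero_nat.comp hφ.tendsto_atTop)
  obtain ⟨hz, hw⟩ := (add_eq_zero_iff_of_nonneg (sq_nonneg _) (sq_nonneg _)).1 hgp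
  refine ⟨a ∘ φ, z, ?_, norm_eq_zero.1 (pow_eq_zero_iff two_ne_zero |>.1 hw) ▸ hlim⟩
  nlinarith [norm_nonneg z, pow_eq_zero_iff two_ne_zero |>.1 hz]

theorem eq_zero_of_const_of_integrable {E F : Type*} [NormedAddCommGroup E]
    [NormedAddCommGroup F] [ProperSpace E] [ProperSpace F] {Φ : E × F → ℝ} (hΦ : Continuous Φ)
    (hΦ₀ : ∀ z, ‖z‖ = 1 → Φ (z, 0) = 0) {u : ℝ → E} {v : ℝ → F}
    (hconst : ∀ x y, Φ (u x, v x) = Φ (u y, v y))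
    (hint : Integrable (fun x => (1 - ‖u x‖ ^ 2) ^ 2 + ‖v x‖ ^ 2)) (x : ℝ) :
    Φ (u x, v x) = 0 := by
  obtain ⟨a, z, hz, hlim⟩ := exists_seq_tendsto_of_integrable hint
  rw [← hΦ₀ z hz]
  exact tendsto_nhds_unique (tendsto_const_nhds.congr fun n => hconst x (a n))
    ((hΦ.tendsto _).comp hlim)

section ModulusIdentity

variable {κ c : ℝ} {ρ d : ℝ → ℝ}

theorem eq_one_of_sq_mul_eq_of_two_lt (hρ : Continuous ρ) (hκ : κ < 1 / 2) (hc : 2 < c ^ 2)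
    (hint : Integrable (fun x => (1 - ρ x) ^ 2))
    (hid : ∀ x, d x ^ 2 * (1 - 2 * κ * ρ x) = (1 - ρ x) ^ 2 * (2 * ρ x - c ^ 2)) (x : ℝ) :
    ρ x = 1 := by
  have hnear : ∀ᶠ s in 𝓝 (1 : ℝ), 0 < 1 - 2 * κ * s ∧ 2 * s - c ^ 2 < 0 := by
    refine (ContinuousAt.eventually_lt (by fun_prop) (by fun_prop) ?_).and
      (ContinuousAt.eventually_lt (by fun_prop) (by fun_prop) ?_) <;> linarith
  obtain ⟨ε, hε, hball⟩ := Metric.eventually_nhds_iff.1 hnear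
  obtain ⟨x₀, hx₀⟩ := exists_norm_lt_of_integrable (by simp) hint (pow_pos hε 2)
  refine hρ.eq_of_forall_dist_lt_imp_eq (ε := ε) (fun y hy => ?_) (x₀ := x₀) ?_ x
  · obtain ⟨hg, hs⟩ := hball hy
    have hnonneg : 0 ≤ (1 - ρ y) ^ 2 * (2 * ρ y - c ^ 2) := hid y ▸ mul_nonneg (sq_nonneg _) hg.le
    have hsq : (1 - ρ y) ^ 2 = 0 := by nlinarith [sq_nonneg (1 - ρ y)]
    linarith [pow_eq_zero_iff two_ne_zero |>.1 hsq]
  · refine (Real.dist_eq _ _).trans_lt (abs_lt_of_sq_lt_sq ?_ hε.le)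
    calc (ρ x₀ - 1) ^ 2 = ‖(1 - ρ x₀) ^ 2‖ := by rw [norm_pow, Real.norm_eq_abs, sq_abs]; ring
      _ < ε ^ 2 := hx₀

theorem eq_one_of_sq_mul_eq_of_two_eq (hd : ∀ x, HasDerivAt ρ (d x) x) (hρ₀ : ∀ x, 0 ≤ ρ x)
    (hκ : κ < 1 / 2) (hint : Integrable (fun x => (1 - ρ x) ^ 2))
    (hid : ∀ x, d x ^ 2 * (1 - 2 * κ * ρ x) = (1 - ρ x) ^ 2 * (2 * ρ x - 2)) (x : ℝ) :
    ρ x = 1 := by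
  have hcube : ∀ y, d y ^ 2 * (1 - 2 * κ * ρ y) = 2 * (ρ y - 1) ^ 3 :=
    fun y => (hid y).trans (by ring)
  have hg : ∀ y, 0 < 1 - 2 * κ * ρ y := fun y => by
    by_contra! hy
    have hle : ρ y - 1 ≤ 0 := (Odd.pow_nonpos_iff (n := 3) (by decide)).1 <| by
      nlinarith [hcube y, mul_nonneg (sq_nonneg (d y)) (neg_nonneg.2 hy)]
    rcases le_or_gt κ 0 with hκ₀ | hκ₀ <;> nlinarith [hρ₀ y]
  have hge : ∀ y, 0 ≤ ρ y - 1 := fun y => (Odd.pow_nonneg_iff (n := 3) (by decide)).1 <| by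
    nlinarith [hcube y, mul_nonneg (sq_nonneg (d y)) (hg y).le]
  have hle := nonpos_of_deriv_ne_zero_of_integrable_sq (fun y => (hd y).sub_const 1)
    (fun y hy hdy => by simpa [hdy, hy.ne'] using hcube y)
    (by simpa only [sub_sq_comm] using hint) x
  linarith [hge x]

theorem eq_one_of_sq_mul_eq (hd : ∀ x, HasDerivAt ρ (d x) x) (hρ₀ : ∀ x, 0 ≤ ρ x)
    (hκ : κ < 1 / 2) (hc : 2 ≤ c ^ 2) (hint : Integrable (fun x => (1 - ρ x) ^ 2))
    (hid : ∀ x, d x ^ 2 * (1 - 2 * κ * ρ x) = (1 - ρ x) ^ 2 * (2 * ρ x - c ^ 2)) (x : ℝ) :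
    ρ x = 1 := by
  rcases hc.lt_or_eq with hc | hc
  · exact eq_one_of_sq_mul_eq_of_two_lt
      (continuous_iff_continuousAt.2 fun y => (hd y).continuousAt) hκ hc hint hid x
  · exact eq_one_of_sq_mul_eq_of_two_eq hd hρ₀ hκ hint (hc ▸ hid) x

end ModulusIdentity

section TravelingWave

variable {c κ : ℝ}

/-- `TW c κ` at one point, for `z = u x`, `v = u' x`, `a = u'' x`, with `(|u|²)''` expanded. -/
def TWAt (c κ : ℝ) (z v a : ℂ) : Prop :=
  -Complex.I * c * v + a + z * (1 - ‖z‖ ^ 2 : ℝ) - κ * z * (2 * (‖v‖ ^ 2 + ⟪z, a⟫_ℝ) : ℝ) = 0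

theorem TW.twAt {u : ℝ → ℂ} (hu : Differentiable ℝ u) (hu' : Differentiable ℝ (deriv u))
    (htw : TW c κ u) (x : ℝ) : TWAt c κ (u x) (deriv u x) (deriv (deriv u) x) := by
  have hρ' : deriv (fun y => ((‖u y‖ ^ 2 : ℝ) : ℂ)) =
      fun y => ((2 * ⟪u y, deriv u y⟫_ℝ : ℝ) : ℂ) :=
    funext fun y => (hu y).hasDerivAt.norm_sq.ofReal_comp.deriv
  have hρ'' : HasDerivAt (fun y => 2 * ⟪u y, deriv u y⟫_ℝ)
      (2 * (‖deriv u x‖ ^ 2 + ⟪u x, deriv (deriv u) x⟫_ℝ)) x := by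
    refine ((((hu x).hasDerivAt).inner ℝ (hu' x).hasDerivAt).const_mul 2).congr_deriv ?_
    rw [real_inner_self_eq_norm_sq]
    ring
  have := htw x
  rw [hρ', hρ''.ofReal_comp.deriv] at this
  simpa [TWAt] using this

/-- `⟪i z, w⟫_ℝ = Im (z̄ w)`. -/
def momentum (c : ℝ) (p : ℂ × ℂ) : ℝ := ⟪Complex.I * p.1, p.2⟫_ℝ + c / 2 * (1 - ‖p.1‖ ^ 2)

def energy (κ : ℝ) (p : ℂ × ℂ) : ℝ :=
  ‖p.2‖ ^ 2 - (1 - ‖p.1‖ ^ 2) ^ 2 / 2 - κ / 2 * (2 * ⟪p.1, p.2⟫_ℝ) ^ 2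

theorem continuous_momentum : Continuous (momentum c) := by
  unfold momentum; fun_prop

theorem continuous_energy : Continuous (energy κ) := by
  unfold energy; fun_prop

theorem momentum_eq_zero_of_norm_eq_one {z : ℂ} (hz : ‖z‖ = 1) : momentum c (z, 0) = 0 := by
  simp [momentum, hz]

theorem energy_eq_zero_of_norm_eq_one {z : ℂ} (hz : ‖z‖ = 1) : energy κ (z, 0) = 0 := by
  simp [energy, hz]

variable {u v w : ℝ → ℂ} {x : ℝ}

theorem hasDerivAt_momentum (hu : HasDerivAt u (v x) x) (hv : HasDerivAt v (w x) x)
    (htw : TWAt c κ (u x) (v x) (w x)) : HasDerivAt (fun y => momentum c (u y, v y)) 0 x := by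
  refine (((hu.const_mul Complex.I).inner ℝ hv).add
    ((hu.norm_sq.const_sub 1).const_mul (c / 2))).congr_deriv ?_
  have hre := congrArg Complex.re htw
  have him := congrArg Complex.im htw
  simp only [Complex.inner, Complex.sq_norm, Complex.normSq_apply, Complex.mul_re, Complex.mul_im,
    Complex.conj_re, Complex.conj_im, Complex.I_re, Complex.I_im, Complex.ofReal_re,
    Complex.ofReal_im, Complex.add_re, Complex.add_im, Complex.sub_re, Complex.sub_im,
    Complex.neg_re, Complex.neg_im, Complex.zero_re, Complex.zero_im] at hre him ⊢
  linear_combination (u x).re * him - (u x).im * hre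

theorem hasDerivAt_energy (hu : HasDerivAt u (v x) x) (hv : HasDerivAt v (w x) x)
    (htw : TWAt c κ (u x) (v x) (w x)) : HasDerivAt (fun y => energy κ (u y, v y)) 0 x := by
  have hρ' : HasDerivAt (fun y => 2 * ⟪u y, v y⟫_ℝ) (2 * (‖v x‖ ^ 2 + ⟪u x, w x⟫_ℝ)) x := by
    refine ((hu.inner ℝ hv).const_mul 2).congr_deriv ?_
    rw [real_inner_self_eq_norm_sq]
    ring
  refine ((hv.norm_sq.sub (((hu.norm_sq.const_sub 1).pow 2).div_const 2)).sub
    ((hρ'.pow 2).const_mul (κ / 2))).congr_deriv ?_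
  have hre := congrArg Complex.re htw
  have him := congrArg Complex.im htw
  simp only [Complex.inner, Complex.sq_norm, Complex.normSq_apply, Complex.mul_re, Complex.mul_im,
    Complex.conj_re, Complex.conj_im, Complex.I_re, Complex.I_im, Complex.ofReal_re,
    Complex.ofReal_im, Complex.add_re, Complex.add_im, Complex.sub_re, Complex.sub_im,
    Complex.neg_re, Complex.neg_im, Complex.zero_re, Complex.zero_im] at hre him ⊢
  linear_combination 2 * (v x).re * hre + 2 * (v x).im * him

theorem TW.momentum_eq_zero_and_energy_eq_zero {u : ℝ → ℂ} (hreg : ContDiff ℝ 2 u)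
    (hX : inX u) (htw : TW c κ u) (x : ℝ) :
    momentum c (u x, deriv u x) = 0 ∧ energy κ (u x, deriv u x) = 0 := by
  have hu : Differentiable ℝ u := hreg.differentiable two_ne_zero
  have hu' : Differentiable ℝ (deriv u) := (hreg.deriv' (n := 1)).differentiable one_ne_zero
  have hint : Integrable fun x => (1 - ‖u x‖ ^ 2) ^ 2 + ‖deriv u x‖ ^ 2 :=
    hX.2.integrable_sq.add hX.1.norm.integrable_sq
  have hconst {Φ : ℂ × ℂ → ℝ} (hΦ : ∀ x, HasDerivAt (fun y => Φ (u y, deriv u y)) 0 x) :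
      ∀ x y, Φ (u x, deriv u x) = Φ (u y, deriv u y) :=
    is_const_of_deriv_eq_zero (fun x => (hΦ x).differentiableAt) fun x => (hΦ x).deriv
  exact ⟨eq_zero_of_const_of_integrable continuous_momentum
      (fun _ => momentum_eq_zero_of_norm_eq_one) (hconst fun y => hasDerivAt_momentum
        (hu y).hasDerivAt (hu' y).hasDerivAt (htw.twAt hu hu' y)) hint x,
    eq_zero_of_const_of_integrable continuous_energy
      (fun _ => energy_eq_zero_of_norm_eq_one) (hconst fun y => hasDerivAt_energy
        (hu y).hasDerivAt (hu' y).hasDerivAt (htw.twAt hu hu' y)) hint x⟩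

end TravelingWave

theorem sq_inner_mul_eq_of_momentum_of_energy {c κ : ℝ} {z w : ℂ} (hm : momentum c (z, w) = 0)
    (he : energy κ (z, w) = 0) :
    (2 * ⟪z, w⟫_ℝ) ^ 2 * (1 - 2 * κ * ‖z‖ ^ 2) = (1 - ‖z‖ ^ 2) ^ 2 * (2 * ‖z‖ ^ 2 - c ^ 2) := by
  simp only [momentum, energy, Complex.inner, Complex.sq_norm, Complex.normSq_apply,
    Complex.mul_re, Complex.mul_im, Complex.conj_re, Complex.conj_im, Complex.I_re,
    Complex.I_im] at hm he ⊢
  -- in coordinates `|z̄ w|² = |z|² |w|²` is a ring identity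
  linear_combination 4 * (z.re * z.re + z.im * z.im) * he
    + 2 * (c * (1 - (z.re * z.re + z.im * z.im)) - 2 * (z.re * w.im - z.im * w.re)) * hm

/-- for `κ < 1/2` and `c ≥ √2`, any `C²` finite-energy solution of TW(c,κ)
is a constant of modulus one. -/
theorem stmt0 (κ c : ℝ) (hκ : κ < 1 / 2) (hc : Real.sqrt 2 ≤ c)
    (u : ℝ → ℂ) (hreg : ContDiff ℝ 2 u) (hX : inX u) (htw : TW c κ u) :
    ∃ φ : ℝ, ∀ x : ℝ, u x = Complex.exp (Complex.I * (φ : ℂ)) := by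
  have hu : Differentiable ℝ u := hreg.differentiable two_ne_zero
  have hc2 : 2 ≤ c ^ 2 := (Real.sqrt_le_left ((Real.sqrt_nonneg 2).trans hc)).1 hc
  have hconserved := htw.momentum_eq_zero_and_energy_eq_zero hreg hX
  have hρ : ∀ x, ‖u x‖ ^ 2 = 1 :=
    eq_one_of_sq_mul_eq (fun x => (hu x).hasDerivAt.norm_sq) (fun x => sq_nonneg _) hκ hc2
      hX.2.integrable_sq fun x =>
        sq_inner_mul_eq_of_momentum_of_energy (hconserved x).1 (hconserved x).2
  have hρ' : ∀ x, ⟪u x, deriv u x⟫_ℝ = 0 := fun x => by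
    have := (hu x).hasDerivAt.norm_sq.unique
      ((hasDerivAt_const x (1 : ℝ)).congr_of_eventuallyEq (Eventually.of_forall hρ))
    linarith
  have hu'_zero : ∀ x, deriv u x = 0 := fun x => by
    simpa [energy, hρ x, hρ' x] using (hconserved x).2
  obtain ⟨φ, hφ⟩ := (Complex.norm_eq_one_iff (u 0)).1
    ((pow_eq_one_iff_of_nonneg (norm_nonneg _) two_ne_zero).1 (hρ 0))
  exact ⟨φ, fun x => by rw [is_const_of_deriv_eq_zero hu hu'_zero x 0, ← hφ, mul_comm]⟩
end
end

section
/- Let κ ∈ ℝ, c > 0, and let η_c, v_c : ℝ → ℝ be smooth functions with 0 < η_c < 1 on ℝ satisfying −c η_c = 2 v_c (1−η_c). Then for all δη, δv ∈ C_c^∞(ℝ;ℝ): ∫_ℝ [ ((1−2κ+2κη_c)/(2(1−η_c)))((δη)')² − (η_c'/(2(1−η_c)²))' (δη)² + ((η_c')²/(2(1−η_c)³))(δη)² + (δη)² − 4 v_c δv δη + 2(1−η_c)(δv)² + 2c δv δη ] dx = ∫_ℝ [ ((1−2κ+2κη_c)/(2(1−η_c)))((δη)')² + ( −η_c''/(2(1−η_c)²)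 − (η_c')²/(2(1−η_c)³) + 1 − c²/(2(1−η_c)³) )(δη)² ] dx + ∫_ℝ 2(1−η_c)( δv + c δη/(2(1−η_c)²) )² dx. In other words, the Hessian H_c = E''((η_c,v_c)) − c P''((η_c,v_c)) of the hydrodynamical Lyapunov functional decomposes as ⟨H_c(δη,δv),(δη,δv)⟩ = ⟨L_c δη, δη⟩ + ∫_ℝ 2(1−η_c)(δv + cδη/(2(1−η_c)²))² dx. -/
open MeasureTheory Real Filter Set

noncomputable section

/-- decomposition of the Hessian H_c = E'' - cP'' of the hydrodynamical
Lyapunov functional: for test functions δη, δv ∈ C_c^∞,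
⟨H_c(δη,δv),(δη,δv)⟩ = ⟨L_c δη, δη⟩ + ∫ 2(1-η_c)(δv + cδη/(2(1-η_c)²))². -/
theorem stmt12 (κ c : ℝ) (hc0 : 0 < c)
    (η v : ℝ → ℝ) (hηreg : ContDiff ℝ (⊤ : ℕ∞) η) (hvreg : ContDiff ℝ (⊤ : ℕ∞) v)
    (hb : ∀ x : ℝ, 0 < η x ∧ η x < 1)
    (hrel : ∀ x : ℝ, -c * η x = 2 * v x * (1 - η x))
    (δη δv : ℝ → ℝ)
    (hδη : ContDiff ℝ (⊤ : ℕ∞) δη) (hδηc : HasCompactSupport δη)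
    (hδv : ContDiff ℝ (⊤ : ℕ∞) δv) (hδvc : HasCompactSupport δv) :
    (∫ x : ℝ,
        ((1 - 2 * κ + 2 * κ * η x) / (2 * (1 - η x))) * (deriv δη x) ^ 2
          - deriv (fun y : ℝ => deriv η y / (2 * (1 - η y) ^ 2)) x * (δη x) ^ 2
          + ((deriv η x) ^ 2 / (2 * (1 - η x) ^ 3)) * (δη x) ^ 2
          + (δη x) ^ 2
          - 4 * v x * δv x * δη x
          + 2 * (1 - η x) * (δv x) ^ 2
          + 2 * c * δv x * δη x)
      = (∫ x : ℝ,
          ((1 - 2 * κ + 2 * κ * η x) / (2 * (1 - η x))) * (deriv δη x) ^ 2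
            + (-(deriv (deriv η) x) / (2 * (1 - η x) ^ 2)
                - (deriv η x) ^ 2 / (2 * (1 - η x) ^ 3)
                + 1 - c ^ 2 / (2 * (1 - η x) ^ 3)) * (δη x) ^ 2)
        + ∫ x : ℝ,
            2 * (1 - η x) * (δv x + c * δη x / (2 * (1 - η x) ^ 2)) ^ 2 := by
  have hne : ∀ x : ℝ, (1 : ℝ) - η x ≠ 0 := fun x => by
    have := (hb x).2; linarith
  -- v in terms of η
  have hv : ∀ x : ℝ, v x = -(c * η x) / (2 * (1 - η x)) := by
    intro x
    have h := hrel x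
    have h2 : (2 : ℝ) * (1 - η x) ≠ 0 := by have := hne x; positivity
    rw [eq_div_iff h2]
    linarith
  -- derivatives of η
  have hηinf : ContDiff ℝ (((⊤ : ℕ∞) : WithTop ℕ∞)) η := hηreg.of_le (by simp)
  have hδηinf : ContDiff ℝ (((⊤ : ℕ∞) : WithTop ℕ∞)) δη := hδη.of_le (by simp)
  have hηd : Differentiable ℝ η := hηreg.differentiable (by simp)
  have hη' : ContDiff ℝ (((⊤ : ℕ∞) : WithTop ℕ∞)) (deriv η) := (contDiff_infty_iff_deriv.mp hηinf).2
  have hη'd : Differentiable ℝ (deriv η) := (contDiff_infty_iff_deriv.mp hη').1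
  -- compute the derivative of η'/(2(1-η)²)
  have hd : ∀ x : ℝ, deriv (fun y : ℝ => deriv η y / (2 * (1 - η y) ^ 2)) x
      = deriv (deriv η) x / (2 * (1 - η x) ^ 2) + (deriv η x) ^ 2 / ((1 - η x) ^ 3) := by
    intro x
    have h1 : HasDerivAt η (deriv η x) x := (hηd x).hasDerivAt
    have h2 : HasDerivAt (deriv η) (deriv (deriv η) x) x := (hη'd x).hasDerivAt
    have hden : HasDerivAt (fun y : ℝ => 2 * (1 - η y) ^ 2)
        (-4 * (1 - η x) * deriv η x) x := by
      have h3 : HasDerivAt (fun y : ℝ => (1 : ℝ) - η y) (-deriv η x) x := by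
        simpa using h1.const_sub (1 : ℝ)
      have h4 : HasDerivAt (fun y : ℝ => 2 * (1 - η y) ^ 2) _ x := (h3.pow 2).const_mul (2 : ℝ)
      convert h4 using 1
      ring
    have hden0 : 2 * (1 - η x) ^ 2 ≠ 0 := by
      have := hne x; positivity
    have hx := hne x
    rw [show deriv (fun y : ℝ => deriv η y / (2 * (1 - η y) ^ 2)) x = _ from (h2.div hden hden0).deriv, div_add_div _ _ hden0 (pow_ne_zero 3 hx),
      div_eq_div_iff (pow_ne_zero 2 hden0) (mul_ne_zero hden0 (pow_ne_zero 3 hx))]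
    ring
  -- the two RHS integrands
  set f : ℝ → ℝ := fun x =>
    ((1 - 2 * κ + 2 * κ * η x) / (2 * (1 - η x))) * (deriv δη x) ^ 2
      + (-(deriv (deriv η) x) / (2 * (1 - η x) ^ 2)
          - (deriv η x) ^ 2 / (2 * (1 - η x) ^ 3)
          + 1 - c ^ 2 / (2 * (1 - η x) ^ 3)) * (δη x) ^ 2 with hf
  set g : ℝ → ℝ := fun x =>
    2 * (1 - η x) * (δv x + c * δη x / (2 * (1 - η x) ^ 2)) ^ 2 with hg
  -- pointwise identity
  have key : ∀ x : ℝ,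
      ((1 - 2 * κ + 2 * κ * η x) / (2 * (1 - η x))) * (deriv δη x) ^ 2
          - deriv (fun y : ℝ => deriv η y / (2 * (1 - η y) ^ 2)) x * (δη x) ^ 2
          + ((deriv η x) ^ 2 / (2 * (1 - η x) ^ 3)) * (δη x) ^ 2
          + (δη x) ^ 2
          - 4 * v x * δv x * δη x
          + 2 * (1 - η x) * (δv x) ^ 2
          + 2 * c * δv x * δη x = f x + g x := by
    intro x
    have hx := hne x
    rw [hd x, hv x]
    simp only [hf, hg]
    field_simp
    ring
  -- continuity facts
  have hcη : Continuous η := hηreg.continuous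
  have hcη' : Continuous (deriv η) := hη'.continuous
  have hcη'' : Continuous (deriv (deriv η)) := (contDiff_infty_iff_deriv.mp hη').2.continuous
  have hcδη : Continuous δη := hδη.continuous
  have hcδη' : Continuous (deriv δη) := (contDiff_infty_iff_deriv.mp hδηinf).2.continuous
  have hcδv : Continuous δv := hδv.continuous
  have hden2 : ∀ x : ℝ, 2 * (1 - η x) ≠ 0 := fun x => by
    have := hne x; positivity
  have hden3 : ∀ x : ℝ, 2 * (1 - η x) ^ 2 ≠ 0 := fun x => by
    have := hne x; positivity
  have hden4 : ∀ x : ℝ, 2 * (1 - η x) ^ 3 ≠ 0 := fun x => by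
    have := hne x; positivity
  have hcden2 : Continuous fun x : ℝ => 2 * (1 - η x) :=
    continuous_const.mul (continuous_const.sub hcη)
  have hcden3 : Continuous fun x : ℝ => 2 * (1 - η x) ^ 2 :=
    continuous_const.mul ((continuous_const.sub hcη).pow 2)
  have hcden4 : Continuous fun x : ℝ => 2 * (1 - η x) ^ 3 :=
    continuous_const.mul ((continuous_const.sub hcη).pow 3)
  have hcf : Continuous f := by
    rw [hf]
    exact ((((continuous_const.sub continuous_const).add
        ((continuous_const.mul continuous_const).mul hcη)).div hcden2 hden2).mul
        (hcδη'.pow 2)).add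
      ((((hcη''.neg.div hcden3 hden3).sub ((hcη'.pow 2).div hcden4 hden4)).add
          continuous_const).sub (continuous_const.div hcden4 hden4) |>.mul (hcδη.pow 2))
  have hcg : Continuous g := by
    rw [hg]
    exact (continuous_const.mul (continuous_const.sub hcη)).mul
      ((hcδv.add ((continuous_const.mul hcδη).div hcden3 hden3)).pow 2)
  -- compact support facts
  have hsδη2 : HasCompactSupport (fun x => (δη x) ^ 2) := by
    exact hδηc.comp_left (by simp) (g := fun t : ℝ => t ^ 2)
  have hsδη'2 : HasCompactSupport (fun x => (deriv δη x) ^ 2) := by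
    exact hδηc.deriv.comp_left (by simp) (g := fun t : ℝ => t ^ 2)
  have hsf : HasCompactSupport f := by
    apply HasCompactSupport.add
    · exact hsδη'2.mul_left
    · exact hsδη2.mul_left
  have hsg : HasCompactSupport g := by
    have h1 : HasCompactSupport (fun x => δv x + c * δη x / (2 * (1 - η x) ^ 2)) := by
      apply hδvc.add
      have heq : (fun x => c * δη x / (2 * (1 - η x) ^ 2))
          = fun x => (c / (2 * (1 - η x) ^ 2)) * δη x := by
        funext x; ring
      rw [heq]
      exact hδηc.mul_left
    have h2 : HasCompactSupport (fun x => (δv x + c * δη x / (2 * (1 - η x) ^ 2)) ^ 2) :=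
      h1.comp_left (by simp) (g := fun t : ℝ => t ^ 2)
    exact h2.mul_left
  have hif : Integrable f := hcf.integrable_of_hasCompactSupport hsf
  have hig : Integrable g := hcg.integrable_of_hasCompactSupport hsg
  calc (∫ x : ℝ,
        ((1 - 2 * κ + 2 * κ * η x) / (2 * (1 - η x))) * (deriv δη x) ^ 2
          - deriv (fun y : ℝ => deriv η y / (2 * (1 - η y) ^ 2)) x * (δη x) ^ 2
          + ((deriv η x) ^ 2 / (2 * (1 - η x) ^ 3)) * (δη x) ^ 2
          + (δη x) ^ 2
          - 4 * v x * δv x * δη x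
          + 2 * (1 - η x) * (δv x) ^ 2
          + 2 * c * δv x * δη x)
      = ∫ x : ℝ, (f x + g x) := by
        apply integral_congr_ae
        filter_upwards with x using key x
    _ = (∫ x : ℝ, f x) + ∫ x : ℝ, g x := integral_add hif hig
end
end
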